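/- arXiv:0901.4324 — 2 statements merged into one kernel-verified Lean document; each statement's English description precedes it below -/
import Mathlib

section
/- Let N ≥ 1 and let f be continuous satisfying (P) and (KO). Let u : (r₀,1) → ℝ be a strictly increasing C² function solving u''(r) + ((N−1)/r)·u'(r) = f(u(r)) for r ∈ (r₀,1) with u(r) → +∞ as r → 1⁻, and define g(r) = F(u(r)) − u'(r)²/2. Then lim_{r→1⁻} g(r)/F(u(r)) = 0; moreover, if N ≥ 2, then lim_{r→1⁻} g(r) / ( (N−1)·∫_a^{u(r)} √(2F(t)) dt ) = 1 (in particular g(r) → +∞ as r → 1⁻). -/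
/-!
Call `g = F ∘ u - u' ^ 2 / 2` the energy. The equation gives `g' = (N - 1) u' ^ 2 / r ≥ 0`, so `g`
is nondecreasing and eventually `u' ≤ 2 √(F ∘ u)`; hence `g'` is dominated by a multiple of the
derivative of `r ↦ ∫_c^{u r} √F`. The Keller–Osserman condition makes this integral `o(F)`, because
`∫_S^T √F ≤ F T · ∫_S^∞ 1/√F` for the nondecreasing `F`. So `g = o(F ∘ u)`, i.e.
`u' ~ √(2 F ∘ u)`, and then the ratio of `g'` to the derivative of `(N - 1) ∫_a^u √(2F)` is
`u' / (r √(2 F ∘ u)) → 1`, so an `∞/∞` l'Hôpital rule gives the second limit.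
-/

open MeasureTheory Filter Set Topology

lemma tendsto_div_of_abs_sub_mul_le {α : Type*} {l : Filter α} {f g : α → ℝ} {L : ℝ}
    (hg : Tendsto g l atTop) (h : ∀ ε > 0, ∃ C, ∀ᶠ x in l, |f x - L * g x| ≤ ε * g x + C) :
    Tendsto (fun x => f x / g x) l (𝓝 L) := by
  rw [Metric.tendsto_nhds]
  intro δ hδ
  obtain ⟨C, hC⟩ := h (δ / 2) (half_pos hδ)
  filter_upwards [hC, hg.eventually_gt_atTop 0, hg.eventually_gt_atTop (2 * C / δ)]
    with x hx hpos hbig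
  rw [div_lt_iff₀ hδ] at hbig
  rw [Real.dist_eq, div_sub' hpos.ne', mul_comm (g x), abs_div, abs_of_pos hpos,
    div_lt_iff₀ hpos]
  linarith

lemma monotoneOn_of_hasDerivAt_nonneg {D : Set ℝ} (hD : Convex ℝ D) {f f' : ℝ → ℝ}
    (hf : ∀ x ∈ D, HasDerivAt f (f' x) x) (hf' : ∀ x ∈ D, 0 ≤ f' x) : MonotoneOn f D :=
  monotoneOn_of_hasDerivWithinAt_nonneg hD
    (fun x hx => (hf x hx).continuousAt.continuousWithinAt)
    (fun x hx => (hf x (interior_subset hx)).hasDerivWithinAt)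
    fun x hx => hf' x (interior_subset hx)

theorem lhopital_atTop_nhdsLT {f g f' g' : ℝ → ℝ} {b L : ℝ}
    (hff' : ∀ᶠ x in 𝓝[<] b, HasDerivAt f (f' x) x)
    (hgg' : ∀ᶠ x in 𝓝[<] b, HasDerivAt g (g' x) x) (hg' : ∀ᶠ x in 𝓝[<] b, 0 < g' x)
    (hgtop : Tendsto g (𝓝[<] b) atTop)
    (hdiv : Tendsto (fun x => f' x / g' x) (𝓝[<] b) (𝓝 L)) :
    Tendsto (fun x => f x / g x) (𝓝[<] b) (𝓝 L) := by
  refine tendsto_div_of_abs_sub_mul_le hgtop fun ε hε => ?_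
  obtain ⟨c, hcb, hc⟩ := mem_nhdsLT_iff_exists_Ioo_subset.1
    (hff'.and (hgg'.and (hg'.and (Metric.tendsto_nhds.1 hdiv ε hε))))
  have hslope : ∀ x ∈ Ioo c b, |f' x - L * g' x| ≤ ε * g' x := fun x hx => by
    obtain ⟨-, -, hpos, hlt⟩ := hc hx
    rw [Real.dist_eq, div_sub' hpos.ne', mul_comm (g' x), abs_div, abs_of_pos hpos,
      div_lt_iff₀ hpos] at hlt
    exact hlt.le
  have hup : MonotoneOn (fun x => (L + ε) * g x - f x) (Ioo c b) :=
    monotoneOn_of_hasDerivAt_nonneg (convex_Ioo c b)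
      (fun x hx => ((hc hx).2.1.const_mul _).sub (hc hx).1)
      fun x hx => by linarith [(abs_le.1 (hslope x hx)).2]
  have hlow : MonotoneOn (fun x => f x - (L - ε) * g x) (Ioo c b) :=
    monotoneOn_of_hasDerivAt_nonneg (convex_Ioo c b)
      (fun x hx => (hc hx).1.sub ((hc hx).2.1.const_mul _))
      fun x hx => by linarith [(abs_le.1 (hslope x hx)).1]
  obtain ⟨x₀, hx₀⟩ : (Ioo c b).Nonempty := nonempty_Ioo.2 hcb
  refine ⟨ε * |g x₀| + |f x₀ - L * g x₀|, ?_⟩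
  filter_upwards [Ioo_mem_nhdsLT hx₀.2] with x hx
  have hx' : x ∈ Ioo c b := ⟨hx₀.1.trans hx.1, hx.2⟩
  have h₁ : (L + ε) * g x₀ - f x₀ ≤ (L + ε) * g x - f x := hup hx₀ hx' hx.1.le
  have h₂ : f x₀ - (L - ε) * g x₀ ≤ f x - (L - ε) * g x := hlow hx₀ hx' hx.1.le
  have h₃ := mul_le_mul_of_nonneg_left (le_abs_self (g x₀)) hε.le
  have h₄ := mul_le_mul_of_nonneg_left (neg_abs_le (g x₀)) hε.le
  rw [abs_le]
  constructor <;> linarith [le_abs_self (f x₀ - L * g x₀), neg_abs_le (f x₀ - L * g x₀)]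

lemma tendsto_intervalIntegral_atTop {φ : ℝ → ℝ} (hφ : Continuous φ)
    (htop : Tendsto φ atTop atTop) (c : ℝ) :
    Tendsto (fun T => ∫ t in c..T, φ t) atTop atTop := by
  obtain ⟨S, hS⟩ := eventually_atTop.1 (htop.eventually_ge_atTop 1)
  refine tendsto_atTop_mono' _ ?_ (tendsto_atTop_add_const_left _ ((∫ t in c..S, φ t) - S)
    tendsto_id)
  filter_upwards [eventually_ge_atTop S] with T hT
  have hlin : T - S ≤ ∫ t in S..T, φ t := by
    simpa using intervalIntegral.integral_mono_on hT (intervalIntegrable_const (μ := volume))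
      (hφ.intervalIntegrable S T) fun t ht => hS t ht.1
  rw [← intervalIntegral.integral_add_adjacent_intervals (hφ.intervalIntegrable c S)
    (hφ.intervalIntegrable S T)]
  dsimp only [id]
  linarith

section Primitive

variable {f F : ℝ → ℝ} {a : ℝ}

lemma hasDerivAt_of_eq_intervalIntegral (hf : Continuous f) (hF : ∀ t, F t = ∫ s in a..t, f s)
    (t : ℝ) : HasDerivAt F (f t) t := by
  rw [funext hF]
  exact (hf.integral_hasStrictDerivAt a t).hasDerivAt

lemma monotoneOn_Ici_of_eq_intervalIntegral (hf : Continuous f)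
    (hF : ∀ t, F t = ∫ s in a..t, f s) (hfpos : ∀ t, a < t → 0 ≤ f t) : MonotoneOn F (Ici a) :=
  monotoneOn_of_hasDerivWithinAt_nonneg (convex_Ici a)
    (fun t _ => (hasDerivAt_of_eq_intervalIntegral hf hF t).continuousAt.continuousWithinAt)
    (fun t _ => (hasDerivAt_of_eq_intervalIntegral hf hF t).hasDerivWithinAt)
    fun t ht => hfpos t (by simpa using ht)

lemma pos_of_eq_intervalIntegral (hf : Continuous f) (hF : ∀ t, F t = ∫ s in a..t, f s)
    (ha : 0 < f a) (hfpos : ∀ t, a < t → 0 ≤ f t) {t : ℝ} (ht : a < t) : 0 < F t := by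
  have hmono := monotoneOn_Ici_of_eq_intervalIntegral hf hF hfpos
  have hFa : F a = 0 := by rw [hF, intervalIntegral.integral_same]
  obtain ⟨x, hxne, hx⟩ : ∃ x, F x ≠ F a ∧ x ∈ Ioc a t :=
    (((hasDerivAt_of_eq_intervalIntegral hf hF a).eventually_ne ha.ne').filter_mono
      (nhdsGT_le_nhdsNE a) |>.and (Ioc_mem_nhdsGT ht)).exists
  have hFx : F a ≤ F x := hmono self_mem_Ici hx.1.le hx.1.le
  exact (hFa ▸ lt_of_le_of_ne hFx hxne.symm).trans_le (hmono hx.1.le ht.le hx.2)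

end Primitive

section KellerOsserman

variable {F : ℝ → ℝ} {M : ℝ}

theorem tendsto_atTop_of_integrableOn_inv_sqrt (hmono : MonotoneOn F (Ici M)) (hM : 0 < F M)
    (hint : IntegrableOn (fun t => 1 / √(F t)) (Ici M)) : Tendsto F atTop atTop := by
  rw [tendsto_atTop_atTop]
  intro B
  by_contra! hB
  have hbound : ∀ t ∈ Ici M, F t < B := fun t ht => by
    obtain ⟨s, hts, hs⟩ := hB t
    exact (hmono ht (mem_Ici.2 ((mem_Ici.1 ht).trans hts)) hts).trans_lt hs
  have hB0 : 0 < B := hM.trans (hbound M self_mem_Ici)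
  have hconst : IntegrableOn (fun _ => 1 / √B) (Ici M) := by
    refine Integrable.mono' hint aestronglyMeasurable_const
      ((ae_restrict_iff' measurableSet_Ici).2 (.of_forall fun t ht => ?_))
    have hFt : 0 < F t := hM.trans_le (hmono self_mem_Ici ht ht)
    rw [Real.norm_of_nonneg (by positivity)]
    gcongr
    exact (hbound t ht).le
  rw [integrableOn_const_iff] at hconst
  simp only [Real.volume_Ici, lt_self_iff_false, or_false, enorm_eq_zero, one_div, inv_eq_zero,
    Real.sqrt_eq_zero'] at hconst
  linarith

lemma intervalIntegral_sqrt_le_mul_setIntegral_Ioi (hmono : MonotoneOn F (Ici M))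
    (hM : 0 < F M) (hint : IntegrableOn (fun t => 1 / √(F t)) (Ici M)) {S T : ℝ}
    (hMS : M ≤ S) (hST : S ≤ T) :
    ∫ t in S..T, √(F t) ≤ F T * ∫ t in Ioi S, 1 / √(F t) := by
  have hintS : IntegrableOn (fun t => 1 / √(F t)) (Ioi S) :=
    hint.mono_set (Ioi_subset_Ici_self.trans (Ici_subset_Ici.2 hMS))
  have hintST : IntervalIntegrable (fun t => 1 / √(F t)) volume S T :=
    (intervalIntegrable_iff_integrableOn_Ioc_of_le hST).2 (hintS.mono_set Ioc_subset_Ioi_self)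
  calc ∫ t in S..T, √(F t) ≤ ∫ t in S..T, F T * (1 / √(F t)) := by
        refine intervalIntegral.integral_mono_on hST ?_ (hintST.const_mul _) fun t ht => ?_
        · refine (Real.sqrt_monotone.comp_monotoneOn (hmono.mono ?_)).intervalIntegrable
          rw [uIcc_of_le hST]
          exact fun t ht => hMS.trans ht.1
        · have hMt : M ≤ t := hMS.trans ht.1
          rw [mul_one_div]
          conv_lhs => rw [← Real.div_sqrt]
          exact div_le_div_of_nonneg_right (hmono hMt (hMt.trans ht.2) ht.2) (Real.sqrt_nonneg _)
    _ = F T * ∫ t in S..T, 1 / √(F t) := intervalIntegral.integral_const_mul _ _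
    _ ≤ F T * ∫ t in Ioi S, 1 / √(F t) := by
        have hFT : 0 < F T := hM.trans_le (hmono self_mem_Ici (hMS.trans hST) (hMS.trans hST))
        gcongr
        rw [intervalIntegral.integral_of_le hST]
        exact setIntegral_mono_set hintS (.of_forall fun _ => by positivity)
          Ioc_subset_Ioi_self.eventuallyLE

theorem tendsto_intervalIntegral_sqrt_div_atTop (hFc : Continuous F)
    (hmono : MonotoneOn F (Ici M)) (hM : 0 < F M)
    (hint : IntegrableOn (fun t => 1 / √(F t)) (Ici M)) (c : ℝ) :
    Tendsto (fun T => (∫ t in c..T, √(F t)) / F T) atTop (𝓝 0) := by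
  have hFtop := tendsto_atTop_of_integrableOn_inv_sqrt hmono hM hint
  have htail : Tendsto (fun S => ∫ t in Ioi S, 1 / √(F t)) atTop (𝓝 0) := by
    have hempty : ⋂ S : ℝ, Ioi S = ∅ :=
      eq_empty_of_forall_notMem fun x hx => lt_irrefl x (mem_iInter.1 hx x)
    simpa [hempty] using tendsto_setIntegral_of_antitone (μ := volume) (fun _ => measurableSet_Ioi)
      (fun _ _ h => Ioi_subset_Ioi h) ⟨M, hint.mono_set Ioi_subset_Ici_self⟩
  rw [Metric.tendsto_nhds]
  intro ε hε
  obtain ⟨S, hS, hMS, hcS⟩ := ((Metric.tendsto_nhds.1 htail (ε / 2) (half_pos hε)).and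
    ((eventually_ge_atTop M).and (eventually_ge_atTop c))).exists
  rw [Real.dist_eq, sub_zero] at hS
  filter_upwards [eventually_ge_atTop S, hFtop.eventually_gt_atTop 0,
    Metric.tendsto_nhds.1
      ((tendsto_const_nhds (x := ∫ t in c..S, √(F t))).div_atTop hFtop) (ε / 2) (half_pos hε)]
    with T hST hFT hhead
  have hsqrt : Continuous fun t => √(F t) := hFc.sqrt
  have hsplit := intervalIntegral.integral_add_adjacent_intervals
    (hsqrt.intervalIntegrable (μ := volume) c S) (hsqrt.intervalIntegrable S T)
  have hpiece := intervalIntegral_sqrt_le_mul_setIntegral_Ioi hmono hM hint hMS hST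
  have hnonneg : 0 ≤ ∫ t in c..T, √(F t) :=
    intervalIntegral.integral_nonneg (hcS.trans hST) fun _ _ => Real.sqrt_nonneg _
  rw [Real.dist_eq, sub_zero] at hhead ⊢
  rw [abs_of_nonneg (div_nonneg hnonneg hFT.le), div_lt_iff₀ hFT]
  rw [abs_div, abs_of_pos hFT, div_lt_iff₀ hFT] at hhead
  nlinarith [le_abs_self (∫ t in Ioi S, 1 / √(F t)), le_abs_self (∫ t in c..S, √(F t))]

end KellerOsserman

lemma hasDerivAt_energy {f F u u' : ℝ → ℝ} {u'' k r : ℝ} (hF : HasDerivAt F (f (u r)) (u r))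
    (hu : HasDerivAt u (u' r) r) (hu' : HasDerivAt u' u'' r)
    (hode : u'' + k / r * u' r = f (u r)) :
    HasDerivAt (fun r => F (u r) - u' r ^ 2 / 2) (k / r * u' r ^ 2) r := by
  refine ((hF.comp r hu).sub ((hu'.pow 2).div_const 2)).congr_deriv ?_
  rw [← hode]
  push_cast
  ring

section Energy

variable {F u u' g : ℝ → ℝ} {k r₀ b : ℝ}

theorem tendsto_energy_div_comp_nhdsLT (hr₀ : 0 ≤ r₀) (hr₀b : r₀ < b) (hk : 0 ≤ k)
    (hu : ∀ r ∈ Ioo r₀ b, HasDerivAt u (u' r) r) (hu' : ∀ r ∈ Ioo r₀ b, 0 ≤ u' r)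
    (hg : ∀ r ∈ Ioo r₀ b, HasDerivAt g (k / r * u' r ^ 2) r)
    (hgF : ∀ r, g r = F (u r) - u' r ^ 2 / 2) (hutop : Tendsto u (𝓝[<] b) atTop)
    (hFc : Continuous F) (hFtop : Tendsto F atTop atTop)
    (hF : ∀ c, Tendsto (fun T => (∫ t in c..T, √(F t)) / F T) atTop (𝓝 0)) :
    Tendsto (fun r => g r / F (u r)) (𝓝[<] b) (𝓝 0) := by
  have hFu := hFtop.comp hutop
  have hgmono : MonotoneOn g (Ioo r₀ b) :=
    monotoneOn_of_hasDerivAt_nonneg (convex_Ioo r₀ b) hg fun r hr => by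
      have := hr₀.trans_lt hr.1
      positivity
  obtain ⟨r₁, hr₁⟩ : (Ioo r₀ b).Nonempty := nonempty_Ioo.2 hr₀b
  -- `g` is nondecreasing, so `u' ^ 2 = 2 (F ∘ u - g) ≤ 4 F ∘ u` once `F ∘ u ≥ -g r₁`.
  have hkin : ∀ᶠ r in 𝓝[<] b, r ∈ Ioo r₀ b ∧ u' r ≤ 2 * √(F (u r)) := by
    filter_upwards [Ioo_mem_nhdsLT hr₁.2, hFu.eventually_ge_atTop (-g r₁)]
      with r hr (hFr : -g r₁ ≤ F (u r))
    have hr' : r ∈ Ioo r₀ b := ⟨hr₁.1.trans hr.1, hr.2⟩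
    have hgr : g r₁ ≤ g r := hgmono hr₁ hr' hr.1.le
    rw [hgF r] at hgr
    refine ⟨hr', ?_⟩
    nlinarith [Real.sq_sqrt (show 0 ≤ F (u r) by nlinarith), Real.sqrt_nonneg (F (u r)),
      hu' r hr']
  obtain ⟨r₂, hr₂b, hr₂⟩ := mem_nhdsLT_iff_exists_Ioo_subset.1 hkin
  obtain ⟨r₃, hr₃⟩ : (Ioo r₂ b).Nonempty := nonempty_Ioo.2 hr₂b
  have hr₃0 : 0 < r₃ := hr₀.trans_lt (hr₂ hr₃).1.1
  have hsub : Ico r₃ b ⊆ Ioo r₂ b := fun r hr => ⟨hr₃.1.trans_le hr.1, hr.2⟩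
  set K := 2 * (k / r₃)
  have hcmp : MonotoneOn (fun r => K * (∫ t in u r₃..u r, √(F t)) - g r) (Ico r₃ b) := by
    refine monotoneOn_of_hasDerivAt_nonneg (convex_Ico r₃ b)
      (f' := fun r => K * (√(F (u r)) * u' r) - k / r * u' r ^ 2)
      (fun r hr => ?_) (fun r hr => ?_)
    · have hr' := (hr₂ (hsub hr)).1
      exact (((hFc.sqrt.integral_hasStrictDerivAt _ _).hasDerivAt.comp r (hu r hr')).const_mul
        K).sub (hg r hr')
    · obtain ⟨hr', hle⟩ := hr₂ (hsub hr)
      have hkr : k / r ≤ k / r₃ := div_le_div_of_nonneg_left hk hr₃0 hr.1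
      have hu'r := hu' r hr'
      nlinarith [mul_le_mul_of_nonneg_right hkr (sq_nonneg (u' r)),
        mul_le_mul_of_nonneg_left hle (mul_nonneg (div_nonneg hk hr₃0.le) hu'r)]
  have hbound : ∀ r ∈ Ico r₃ b, g r ≤ g r₃ + K * ∫ t in u r₃..u r, √(F t) := by
    intro r hr
    have := hcmp (left_mem_Ico.2 hr₃.2) hr hr.1
    simp only [intervalIntegral.integral_same, mul_zero] at this
    linarith
  have hupper : Tendsto
      (fun r => g r₃ / F (u r) + K * ((∫ t in u r₃..u r, √(F t)) / F (u r))) (𝓝[<] b) (𝓝 0) := by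
    simpa using ((tendsto_const_nhds (x := g r₃)).div_atTop hFu).add
      (((hF (u r₃)).comp hutop).const_mul K)
  refine tendsto_of_tendsto_of_tendsto_of_le_of_le'
    ((tendsto_const_nhds (x := g r₃)).div_atTop hFu) hupper ?_ ?_
  · filter_upwards [Ioo_mem_nhdsLT hr₃.2, hFu.eventually_gt_atTop 0] with r hr hFr
    exact div_le_div_of_nonneg_right
      (hgmono (hr₂ hr₃).1 (hr₂ (hsub ⟨hr.1.le, hr.2⟩)).1 hr.1.le) hFr.le
  · filter_upwards [Ioo_mem_nhdsLT hr₃.2, hFu.eventually_gt_atTop 0] with r hr hFr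
    rw [mul_div_assoc', ← add_div]
    exact div_le_div_of_nonneg_right (hbound r ⟨hr.1.le, hr.2⟩) hFr.le

theorem tendsto_energy_div_integral_nhdsLT (hr₀ : 0 ≤ r₀) (hr₀b : r₀ < b) (hk : 0 < k)
    (hu : ∀ r ∈ Ioo r₀ b, HasDerivAt u (u' r) r) (hu' : ∀ r ∈ Ioo r₀ b, 0 ≤ u' r)
    (hg : ∀ r ∈ Ioo r₀ b, HasDerivAt g (k / r * u' r ^ 2) r)
    (hgF : ∀ r, g r = F (u r) - u' r ^ 2 / 2) (hutop : Tendsto u (𝓝[<] b) atTop)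
    (hFc : Continuous F) (hFtop : Tendsto F atTop atTop)
    (hlim : Tendsto (fun r => g r / F (u r)) (𝓝[<] b) (𝓝 0)) (c : ℝ) :
    Tendsto (fun r => g r / (k * ∫ t in c..u r, √(2 * F t))) (𝓝[<] b) (𝓝 b⁻¹) := by
  have hs : Ioo r₀ b ∈ 𝓝[<] b := Ioo_mem_nhdsLT hr₀b
  have hφ : Continuous fun t => √(2 * F t) := (continuous_const.mul hFc).sqrt
  have hFu : ∀ᶠ r in 𝓝[<] b, 0 < F (u r) := (hFtop.comp hutop).eventually_gt_atTop 0
  have hratio : Tendsto (fun r => u' r / √(2 * F (u r))) (𝓝[<] b) (𝓝 1) := by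
    have h := ((tendsto_const_nhds (x := (1 : ℝ))).sub hlim).sqrt
    rw [sub_zero, Real.sqrt_one] at h
    refine h.congr' ?_
    filter_upwards [hFu, hs] with r hFr hr
    rw [← Real.sqrt_sq (hu' r hr), ← Real.sqrt_div' _ (by positivity), hgF]
    congr 1
    field_simp
    ring
  have hu'pos : ∀ᶠ r in 𝓝[<] b, 0 < u' r := by
    filter_upwards [hratio.eventually_const_lt one_pos, hFu] with r hr hFr
    exact (div_pos_iff_of_pos_right (by positivity)).1 hr
  refine lhopital_atTop_nhdsLT (f' := fun r => k / r * u' r ^ 2)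
    (g' := fun r => k * (√(2 * F (u r)) * u' r))
    (by filter_upwards [hs] with r hr using hg r hr)
    (by filter_upwards [hs] with r hr using
      ((hφ.integral_hasStrictDerivAt c (u r)).hasDerivAt.comp r (hu r hr)).const_mul k)
    (by filter_upwards [hFu, hu'pos] with r hFr hpos; positivity)
    (((tendsto_intervalIntegral_atTop hφ
      (Real.tendsto_sqrt_atTop.comp (hFtop.const_mul_atTop two_pos)) c).comp hutop).const_mul_atTop
        hk) ?_
  have hb : b ≠ 0 := (hr₀.trans_lt hr₀b).ne'
  have h := hratio.div (tendsto_nhdsWithin_of_tendsto_nhds tendsto_id) hb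
  rw [one_div] at h
  refine h.congr' ?_
  filter_upwards [hFu, hu'pos] with r hFr hpos
  have : 0 < √(2 * F (u r)) := by positivity
  simp only [Pi.div_apply, id]
  field_simp

end Energy

theorem stmt16 {N : ℕ} (hN : 1 ≤ N)
    (f : ℝ → ℝ) (hf : Continuous f)
    (a : ℝ) (ha : 0 < f a) (hfpos : ∀ t, a < t → 0 ≤ f t)
    (F : ℝ → ℝ) (hF : ∀ t, F t = ∫ s in a..t, f s)
    (hKO : ∃ M, a < M ∧ IntegrableOn (fun t => 1 / Real.sqrt (F t)) (Ici M))
    (r₀ : ℝ) (hr₀ : 0 ≤ r₀) (hr₀1 : r₀ < 1)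
    (u : ℝ → ℝ)
    (huC2 : ContDiffOn ℝ 2 u (Ioo r₀ 1))
    (humono : StrictMonoOn u (Ioo r₀ 1))
    (huode : ∀ r ∈ Ioo r₀ 1,
      deriv (deriv u) r + ((N : ℝ) - 1) / r * deriv u r = f (u r))
    (hublow : Tendsto u (nhdsWithin 1 (Iio 1)) atTop)
    (g : ℝ → ℝ) (hg : ∀ r, g r = F (u r) - (deriv u r) ^ 2 / 2) :
    Tendsto (fun r => g r / F (u r)) (nhdsWithin 1 (Iio 1)) (nhds 0) ∧
    (2 ≤ N →
      Tendsto (fun r => g r / (((N : ℝ) - 1) * ∫ t in a..(u r), Real.sqrt (2 * F t)))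
        (nhdsWithin 1 (Iio 1)) (nhds 1)) := by
  have hFd := hasDerivAt_of_eq_intervalIntegral hf hF
  have hFc : Continuous F := continuous_iff_continuousAt.2 fun t => (hFd t).continuousAt
  obtain ⟨M, haM, hint⟩ := hKO
  have hmono : MonotoneOn F (Ici M) :=
    (monotoneOn_Ici_of_eq_intervalIntegral hf hF hfpos).mono (Ici_subset_Ici.2 haM.le)
  have hFM : 0 < F M := pos_of_eq_intervalIntegral hf hF ha hfpos haM
  have hFtop := tendsto_atTop_of_integrableOn_inv_sqrt hmono hFM hint
  have hu : ∀ r ∈ Ioo r₀ 1, HasDerivAt u (deriv u r) r := fun r hr =>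
    ((huC2.differentiableOn (by norm_num)).differentiableAt (isOpen_Ioo.mem_nhds hr)).hasDerivAt
  have hu' : ∀ r ∈ Ioo r₀ 1, HasDerivAt (deriv u) (deriv (deriv u) r) r := fun r hr =>
    (((huC2.deriv_of_isOpen (m := 1) isOpen_Ioo (by norm_num)).differentiableOn
      (by norm_num)).differentiableAt (isOpen_Ioo.mem_nhds hr)).hasDerivAt
  have hu'nonneg : ∀ r ∈ Ioo r₀ 1, 0 ≤ deriv u r := fun r hr =>
    (hu r hr).hasDerivWithinAt.nonneg_of_monotoneOn (accPt_iff_frequently_nhdsNE.2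
      (eventually_nhdsWithin_of_eventually_nhds (isOpen_Ioo.mem_nhds hr)).frequently)
      humono.monotoneOn
  have hgd : ∀ r ∈ Ioo r₀ 1, HasDerivAt g (((N : ℝ) - 1) / r * deriv u r ^ 2) r := by
    intro r hr
    rw [funext hg]
    exact hasDerivAt_energy (hFd _) (hu r hr) (hu' r hr) (huode r hr)
  have hN1 : (0 : ℝ) ≤ N - 1 := sub_nonneg.2 (by exact_mod_cast hN)
  have hlim := tendsto_energy_div_comp_nhdsLT hr₀ hr₀1 hN1 hu hu'nonneg hgd hg hublow hFc hFtop
    (tendsto_intervalIntegral_sqrt_div_atTop hFc hmono hFM hint)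
  refine ⟨hlim, fun hN2 => ?_⟩
  have hNpos : (0 : ℝ) < N - 1 := sub_pos.2 (by exact_mod_cast hN2)
  simpa using tendsto_energy_div_integral_nhdsLT hr₀ hr₀1 hNpos hu hu'nonneg hgd hg hublow hFc
    hFtop hlim a
end

section
/- Let M ∈ ℝ and let F : [M,∞) → ℝ be continuous, nondecreasing and positive, such that t ↦ 1/√(2F(t)) is integrable on [M,∞) (i.e. ∫_M^{+∞} dt/√(2F(t)) < +∞). Then lim_{u→+∞} ( ∫_M^u √(2F(t)) dt ) / F(u) = 0; that is, any antiderivative G of √(2F) satisfies G(u) = o(F(u)) as u → +∞. -/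
/-!
Put `g = √(2F)`, so that `F = g² / 2` and `g` is positive and nondecreasing. Since
`g t = g t ² / g t ≤ g u ² / g t` for `t ≤ u`, the integral of `g` over `[A, u]` is at most
`g u ²` times the tail `∫_A^∞ 1 / g`, which is small for large `A` by the Keller–Osserman
condition. The remaining piece `∫_M^A g` is a constant, and `g u → ∞` because `1 / g` could not
be integrable on a half-line if `g` were bounded.
-/

open MeasureTheory Filter Set

section

variable {g : ℝ → ℝ} {M : ℝ}

lemma tendsto_atTop_of_integrableOn_one_div (hmono : MonotoneOn g (Ici M))
    (hpos : ∀ t ∈ Ici M, 0 < g t) (hint : IntegrableOn (fun t => 1 / g t) (Ici M)) :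
    Tendsto g atTop atTop := by
  rw [tendsto_atTop]
  intro b
  by_contra hb
  have hbound : ∀ t ∈ Ici M, g t < b := by
    intro t ht
    by_contra! hbt
    exact hb <| by
      filter_upwards [eventually_ge_atTop t] with u hu
      exact hbt.trans (hmono ht (mem_Ici.2 (le_trans ht hu)) hu)
  have hb0 : 0 < b := (hpos M self_mem_Ici).trans (hbound M self_mem_Ici)
  have hconst : IntegrableOn (fun _ => 1 / b) (Ici M) := by
    refine hint.mono' aestronglyMeasurable_const ?_
    filter_upwards [ae_restrict_mem measurableSet_Ici] with t ht
    rw [Real.norm_eq_abs, abs_of_pos (one_div_pos.2 hb0)]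
    exact one_div_le_one_div_of_le (hpos t ht) (hbound t ht).le
  simp [integrableOn_const_iff, hb0.ne'] at hconst

lemma intervalIntegral_le_sq_mul_integral_Ioi_one_div (hmono : MonotoneOn g (Ici M))
    (hpos : ∀ t ∈ Ici M, 0 < g t) (hint : IntegrableOn (fun t => 1 / g t) (Ici M))
    {A u : ℝ} (hA : M ≤ A) (hAu : A ≤ u) :
    ∫ t in A..u, g t ≤ g u ^ 2 * ∫ t in Ioi A, 1 / g t := by
  have hsub : uIcc A u ⊆ Ici M := by
    rw [uIcc_of_le hAu]
    exact fun t ht => le_trans hA ht.1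
  have hint_Ioi : ∀ {a}, M ≤ a → IntegrableOn (fun t => 1 / g t) (Ioi a) :=
    fun ha => hint.mono_set (Ioi_subset_Ioi ha |>.trans Ioi_subset_Ici_self)
  calc ∫ t in A..u, g t
      ≤ ∫ t in A..u, g u ^ 2 * (1 / g t) := by
        refine intervalIntegral.integral_mono_on hAu (hmono.mono hsub).intervalIntegrable
          (((hint.mono_set hsub).intervalIntegrable).const_mul _) fun t ht => ?_
        have htM : M ≤ t := le_trans hA ht.1
        have hgt := hpos t htM
        rw [mul_one_div, le_div_iff₀ hgt, ← sq]
        exact pow_le_pow_left₀ hgt.le (hmono htM (le_trans htM ht.2) ht.2) 2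
    _ = g u ^ 2 * ∫ t in A..u, 1 / g t := intervalIntegral.integral_const_mul _ _
    _ ≤ g u ^ 2 * ∫ t in Ioi A, 1 / g t := by
        refine mul_le_mul_of_nonneg_left ?_ (sq_nonneg _)
        rw [← intervalIntegral.integral_interval_add_Ioi (hint_Ioi hA)
          (hint_Ioi (le_trans hA hAu))]
        refine le_add_of_nonneg_right (setIntegral_nonneg measurableSet_Ioi fun t ht => ?_)
        exact (one_div_pos.2 (hpos t (le_trans (le_trans hA hAu) (le_of_lt ht)))).le

lemma tendsto_intervalIntegral_div_sq_of_integrableOn_one_div (hmono : MonotoneOn g (Ici M))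
    (hpos : ∀ t ∈ Ici M, 0 < g t) (hint : IntegrableOn (fun t => 1 / g t) (Ici M)) :
    Tendsto (fun u => (∫ t in M..u, g t) / g u ^ 2) atTop (nhds 0) := by
  have hg_top := tendsto_atTop_of_integrableOn_one_div hmono hpos hint
  have hsq_top : Tendsto (fun u => g u ^ 2) atTop atTop :=
    (tendsto_pow_atTop two_ne_zero).comp hg_top
  refine tendsto_order.2 ⟨fun a ha => ?_, fun ε hε => ?_⟩
  · filter_upwards [eventually_ge_atTop M] with u hu
    exact ha.trans_le (div_nonneg (intervalIntegral.integral_nonneg hu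
      fun t ht => (hpos t ht.1).le) (sq_nonneg _))
  obtain ⟨A, hA, hA_tail⟩ : ∃ A, M ≤ A ∧ ∫ t in Ioi A, 1 / g t < ε / 2 :=
    ((eventually_ge_atTop M).and ((tendsto_integral_Ioi_zero tendsto_id).eventually_lt_const
      (half_pos hε))).exists
  have hhead : ∀ᶠ u in atTop, (∫ t in M..A, g t) / g u ^ 2 < ε / 2 :=
    (tendsto_const_nhds.div_atTop hsq_top).eventually_lt_const (half_pos hε)
  filter_upwards [eventually_ge_atTop A, hhead] with u hAu hu
  have hgu : 0 < g u ^ 2 := pow_pos (hpos u (le_trans hA hAu)) 2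
  have hsub : ∀ {a b}, M ≤ a → a ≤ b → IntervalIntegrable g volume a b := fun ha hab =>
    (hmono.mono (by rw [uIcc_of_le hab]; exact fun t ht => le_trans ha ht.1)).intervalIntegrable
  have hbody : (∫ t in A..u, g t) / g u ^ 2 ≤ ∫ t in Ioi A, 1 / g t := by
    rw [div_le_iff₀' hgu]
    exact intervalIntegral_le_sq_mul_integral_Ioi_one_div hmono hpos hint hA hAu
  rw [← intervalIntegral.integral_add_adjacent_intervals (hsub le_rfl hA) (hsub hA hAu),
    add_div]
  linarith

end

theorem stmt18_general (M : ℝ) (F : ℝ → ℝ)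
    (hmono : MonotoneOn F (Ici M))
    (hpos : ∀ t ∈ Ici M, 0 < F t)
    (hKO : IntegrableOn (fun t => 1 / Real.sqrt (2 * F t)) (Ici M)) :
    Filter.Tendsto (fun u => (∫ t in M..u, Real.sqrt (2 * F t)) / F u)
      Filter.atTop (nhds 0) := by
  have hmono_sqrt : MonotoneOn (fun t => Real.sqrt (2 * F t)) (Ici M) :=
    fun a ha b hb hab => Real.sqrt_le_sqrt (by linarith [hmono ha hb hab])
  have hpos_sqrt : ∀ t ∈ Ici M, 0 < Real.sqrt (2 * F t) :=
    fun t ht => Real.sqrt_pos.2 (by linarith [hpos t ht])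
  have h := (tendsto_intervalIntegral_div_sq_of_integrableOn_one_div hmono_sqrt hpos_sqrt
    hKO).const_mul 2
  rw [mul_zero] at h
  refine h.congr' ?_
  filter_upwards [eventually_ge_atTop M] with u hu
  have hFu := hpos u hu
  rw [Real.sq_sqrt (by linarith)]
  field_simp

theorem stmt18 (M : ℝ) (F : ℝ → ℝ)
    (hcont : ContinuousOn F (Ici M))
    (hmono : MonotoneOn F (Ici M))
    (hpos : ∀ t ∈ Ici M, 0 < F t)
    (hKO : IntegrableOn (fun t => 1 / Real.sqrt (2 * F t)) (Ici M)) :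
    Filter.Tendsto (fun u => (∫ t in M..u, Real.sqrt (2 * F t)) / F u)
      Filter.atTop (nhds 0) :=
  stmt18_general M F hmono hpos hKO
end
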